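/- arXiv:math-ph/0307015 — 6 statements merged into one kernel-verified Lean document; each statement's English description precedes it below -/
import Mathlib

section
/- Let n ≥ 2 and let a₁ > a₂ > … > aₙ be real numbers. For k = 1,…,n define Fₖ : ℝⁿ × ℝⁿ → ℝ by Fₖ(x, v) = vₖ² + Σ_{l ≠ k} (xₖ vₗ − xₗ vₖ)² / (aₖ − aₗ). Then the functions F₁,…,Fₙ pairwise Poisson commute with respect to the canonical Poisson bracket on ℝⁿ × ℝⁿ: {Fₖ, Fₘ} = 0 identically for all k, m. (This is the ambient form of Moser's theorem: restricted to the tangent bundle of the ellipsoid ⟨A⁻¹x, x⟩ = 1 with A = diag(a₁,…,aₙ), these functions give complete integrability of the geodesic flow on the ellipsoid.) -/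
/-!
Write `w_kl = x_k v_l - x_l v_k` and `c_kl = (a_k - a_l)⁻¹`. The gradient of `F_k` is explicit,
and the canonical bracket of two functions is the symplectic pairing of their gradients. For
`k ≠ m` this pairing collapses to `4 ∑_l w_km w_kl w_ml (c_km (c_kl - c_ml) + c_kl c_ml)`. Each
summand vanishes: for `l ∈ {k, m}` because `w_kk = w_mm = 0`, otherwise by the partial fraction
identity `c_kl c_ml = c_km (c_ml - c_kl)`.
-/

open Finset

/-- The canonical Poisson bracket of two functions on `ℝⁿ × ℝⁿ` (coordinates `(x, p)`):
`{F,G} = ∑ i, (∂F/∂xᵢ · ∂G/∂pᵢ − ∂F/∂pᵢ · ∂G/∂xᵢ)`. -/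
noncomputable def poissonBracket (n : ℕ) (F G : (Fin n → ℝ) × (Fin n → ℝ) → ℝ)
    (z : (Fin n → ℝ) × (Fin n → ℝ)) : ℝ :=
  ∑ i : Fin n,
    (fderiv ℝ F z (Pi.single i 1, 0) * fderiv ℝ G z (0, Pi.single i 1) -
      fderiv ℝ F z (0, Pi.single i 1) * fderiv ℝ G z (Pi.single i 1, 0))

variable {n : ℕ}

abbrev PhaseSpace (n : ℕ) := (Fin n → ℝ) × (Fin n → ℝ)

section PoissonBracket

noncomputable def phaseForm (α β : Fin n → ℝ) : PhaseSpace n →L[ℝ] ℝ :=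
  LinearMap.toContinuousLinearMap
    { toFun := fun w => α ⬝ᵥ w.1 + β ⬝ᵥ w.2
      map_add' := fun w w' => by simp only [Prod.fst_add, Prod.snd_add, dotProduct_add]; ring
      map_smul' := fun c w => by
        simp only [Prod.smul_fst, Prod.smul_snd, dotProduct_smul, smul_eq_mul, RingHom.id_apply]
        ring }

@[simp]
theorem phaseForm_apply (α β : Fin n → ℝ) (w : PhaseSpace n) :
    phaseForm α β w = α ⬝ᵥ w.1 + β ⬝ᵥ w.2 := rfl

theorem poissonBracket_self (F : PhaseSpace n → ℝ) (z : PhaseSpace n) :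
    poissonBracket n F F z = 0 :=
  sum_eq_zero fun _ _ => by ring

theorem poissonBracket_eq_of_hasFDerivAt {F G : PhaseSpace n → ℝ} {z : PhaseSpace n}
    {α β γ δ : Fin n → ℝ} (hF : HasFDerivAt F (phaseForm α β) z)
    (hG : HasFDerivAt G (phaseForm γ δ) z) :
    poissonBracket n F G z = α ⬝ᵥ δ - β ⬝ᵥ γ := by
  simp only [poissonBracket, hF.fderiv, hG.fderiv, phaseForm_apply, dotProduct_single,
    dotProduct_zero, add_zero, zero_add, mul_one]
  simp [dotProduct, sum_sub_distrib]

theorem hasFDerivAt_fst_apply (i : Fin n) (z : PhaseSpace n) :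
    HasFDerivAt (fun z : PhaseSpace n => z.1 i) (phaseForm (Pi.single i 1) 0) z := by
  convert (phaseForm (Pi.single i 1) (0 : Fin n → ℝ)).hasFDerivAt using 1
  ext w; simp

theorem hasFDerivAt_snd_apply (i : Fin n) (z : PhaseSpace n) :
    HasFDerivAt (fun z : PhaseSpace n => z.2 i) (phaseForm 0 (Pi.single i 1)) z := by
  convert (phaseForm (0 : Fin n → ℝ) (Pi.single i 1)).hasFDerivAt using 1
  ext w; simp

end PoissonBracket

section AngularMomentum

def angularMomentum (z : PhaseSpace n) (k l : Fin n) : ℝ := z.1 k * z.2 l - z.1 l * z.2 k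

theorem angularMomentum_self (z : PhaseSpace n) (k : Fin n) : angularMomentum z k k = 0 :=
  sub_self _

theorem hasFDerivAt_angularMomentum (k l : Fin n) (z : PhaseSpace n) :
    HasFDerivAt (angularMomentum · k l)
      (phaseForm (z.2 l • Pi.single k 1 - z.2 k • Pi.single l 1)
        (z.1 k • Pi.single l 1 - z.1 l • Pi.single k 1)) z := by
  refine (((hasFDerivAt_fst_apply k z).mul (hasFDerivAt_snd_apply l z)).sub
    ((hasFDerivAt_fst_apply l z).mul (hasFDerivAt_snd_apply k z))).congr_fderiv ?_
  ext w <;> simp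

theorem dotProduct_angularMomentum (u : Fin n → ℝ) (z : PhaseSpace n) (m : Fin n) :
    u ⬝ᵥ (angularMomentum z m ·) = z.1 m * (u ⬝ᵥ z.2) - z.2 m * (u ⬝ᵥ z.1) := by
  simp only [dotProduct, angularMomentum, mul_sum, ← sum_sub_distrib]
  exact sum_congr rfl fun _ _ => by ring

end AngularMomentum

theorem inv_sub_mul_inv_sub {p q r : ℝ} (hpq : p ≠ q) (hpr : p ≠ r) (hqr : q ≠ r) :
    (p - r)⁻¹ * (q - r)⁻¹ = (p - q)⁻¹ * ((q - r)⁻¹ - (p - r)⁻¹) := by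
  field_simp [sub_ne_zero.2 hpq, sub_ne_zero.2 hpr, sub_ne_zero.2 hqr]
  ring

section MoserIntegral

noncomputable def moserIntegral (a : Fin n → ℝ) (k : Fin n) (z : PhaseSpace n) : ℝ :=
  z.2 k ^ 2 + ∑ l, angularMomentum z k l ^ 2 / (a k - a l)

theorem moserIntegral_mk (a : Fin n → ℝ) (k : Fin n) (x v : Fin n → ℝ) :
    moserIntegral a k (x, v) =
      v k ^ 2 + ∑ l ∈ univ.erase k, (x k * v l - x l * v k) ^ 2 / (a k - a l) := by
  rw [moserIntegral, sum_erase _ (by simp)]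
  rfl

noncomputable def moserWeights (a : Fin n → ℝ) (k : Fin n) (z : PhaseSpace n) : Fin n → ℝ :=
  fun l => angularMomentum z k l / (a k - a l)

noncomputable def moserGradX (a : Fin n → ℝ) (k : Fin n) (z : PhaseSpace n) : Fin n → ℝ :=
  (2 : ℝ) • ((moserWeights a k z ⬝ᵥ z.2) • Pi.single k 1 - z.2 k • moserWeights a k z)

noncomputable def moserGradV (a : Fin n → ℝ) (k : Fin n) (z : PhaseSpace n) : Fin n → ℝ :=
  (2 : ℝ) • (z.2 k • Pi.single k 1 + z.1 k • moserWeights a k z -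
    (moserWeights a k z ⬝ᵥ z.1) • Pi.single k 1)

theorem hasFDerivAt_moserIntegral (a : Fin n → ℝ) (k : Fin n) (z : PhaseSpace n) :
    HasFDerivAt (moserIntegral a k) (phaseForm (moserGradX a k z) (moserGradV a k z)) z := by
  have hdiv : moserIntegral a k =
      fun z => z.2 k ^ 2 + ∑ l, angularMomentum z k l ^ 2 * (a k - a l)⁻¹ := by
    funext z; simp only [moserIntegral, div_eq_mul_inv]
  rw [hdiv]
  refine (((hasFDerivAt_snd_apply k z).pow 2).add (HasFDerivAt.fun_sum fun l _ =>
    ((hasFDerivAt_angularMomentum k l z).pow 2).mul_const (a k - a l)⁻¹)).congr_fderiv ?_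
  ext w
  · simp [moserGradX, sub_dotProduct, smul_dotProduct, single_dotProduct]
    simp only [moserWeights, dotProduct, mul_sum, sum_mul, mul_sub, ← sum_sub_distrib]
    exact sum_congr rfl fun _ _ => by ring
  · simp [moserGradV, add_dotProduct, sub_dotProduct, smul_dotProduct, single_dotProduct]
    simp only [moserWeights, dotProduct, mul_sum, sum_mul, mul_sub, mul_add, add_sub_assoc,
      ← sum_sub_distrib]
    rw [mul_assoc]
    exact congrArg _ (sum_congr rfl fun _ _ => by ring)

theorem moserGrad_pairing {a : Fin n → ℝ} {k m : Fin n} (hkm : k ≠ m) (z : PhaseSpace n) :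
    moserGradX a k z ⬝ᵥ moserGradV a m z - moserGradV a k z ⬝ᵥ moserGradX a m z =
      4 * ∑ l, angularMomentum z k m * angularMomentum z k l * angularMomentum z m l *
        ((a k - a m)⁻¹ * ((a k - a l)⁻¹ - (a m - a l)⁻¹) + (a k - a l)⁻¹ * (a m - a l)⁻¹) := by
  have hweights : moserWeights a m z k = moserWeights a k z m := by
    simp only [moserWeights, angularMomentum, ← neg_sub (a k), div_neg, ← neg_div]
    ring_nf
  have hsum : ∑ l, angularMomentum z k m * angularMomentum z k l * angularMomentum z m l *
        ((a k - a m)⁻¹ * ((a k - a l)⁻¹ - (a m - a l)⁻¹) + (a k - a l)⁻¹ * (a m - a l)⁻¹) =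
      moserWeights a k z m * (moserWeights a k z ⬝ᵥ (angularMomentum z m ·) -
          moserWeights a m z ⬝ᵥ (angularMomentum z k ·)) +
        angularMomentum z k m * (moserWeights a k z ⬝ᵥ moserWeights a m z) := by
    simp only [moserWeights, dotProduct, mul_sum, ← sum_sub_distrib, ← sum_add_distrib]
    exact sum_congr rfl fun _ _ => by ring
  rw [hsum, dotProduct_angularMomentum, dotProduct_angularMomentum]
  simp only [moserGradX, moserGradV, dotProduct_smul, dotProduct_sub, dotProduct_add,
    dotProduct_single, smul_dotProduct, sub_dotProduct, add_dotProduct, single_dotProduct,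
    Pi.smul_apply, Pi.sub_apply, Pi.add_apply, Pi.single_eq_of_ne hkm.symm, smul_eq_mul]
  rw [hweights, angularMomentum]
  ring

theorem moserGrad_pairing_eq_zero {a : Fin n → ℝ} (ha : Function.Injective a) {k m : Fin n}
    (hkm : k ≠ m) (z : PhaseSpace n) :
    moserGradX a k z ⬝ᵥ moserGradV a m z - moserGradV a k z ⬝ᵥ moserGradX a m z = 0 := by
  rw [moserGrad_pairing hkm]
  refine mul_eq_zero_of_right _ (sum_eq_zero fun l _ => ?_)
  rcases eq_or_ne l k with rfl | hlk
  · simp [angularMomentum_self]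
  rcases eq_or_ne l m with rfl | hlm
  · simp [angularMomentum_self]
  rw [inv_sub_mul_inv_sub (ha.ne hkm) (ha.ne hlk.symm) (ha.ne hlm.symm)]
  ring

end MoserIntegral

theorem moser_ellipsoid_integrals_commute_general (n : ℕ) (a : Fin n → ℝ)
    (ha : StrictAnti a) (F : Fin n → (Fin n → ℝ) × (Fin n → ℝ) → ℝ)
    (hF : ∀ (k : Fin n) (x v : Fin n → ℝ),
      F k (x, v) = (v k) ^ 2 +
        ∑ l ∈ Finset.univ.erase k, (x k * v l - x l * v k) ^ 2 / (a k - a l)) :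
    ∀ (k m : Fin n) (z : (Fin n → ℝ) × (Fin n → ℝ)), poissonBracket n (F k) (F m) z = 0 := by
  intro k m z
  have hF' : ∀ k, F k = moserIntegral a k := fun k =>
    funext fun ⟨x, v⟩ => by rw [hF, moserIntegral_mk]
  rw [hF', hF']
  rcases eq_or_ne k m with rfl | hkm
  · exact poissonBracket_self _ z
  rw [poissonBracket_eq_of_hasFDerivAt (hasFDerivAt_moserIntegral a k z)
    (hasFDerivAt_moserIntegral a m z)]
  exact moserGrad_pairing_eq_zero ha.injective hkm z

/-- Moser's integrals of the geodesic flow on the ellipsoid pairwise Poisson commute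
on `ℝⁿ × ℝⁿ`. -/
theorem moser_ellipsoid_integrals_commute (n : ℕ) (hn : 2 ≤ n) (a : Fin n → ℝ)
    (ha : StrictAnti a) (F : Fin n → (Fin n → ℝ) × (Fin n → ℝ) → ℝ)
    (hF : ∀ (k : Fin n) (x v : Fin n → ℝ),
      F k (x, v) = (v k) ^ 2 +
        ∑ l ∈ Finset.univ.erase k, (x k * v l - x l * v k) ^ 2 / (a k - a l)) :
    ∀ (k m : Fin n) (z : (Fin n → ℝ) × (Fin n → ℝ)), poissonBracket n (F k) (F m) z = 0 :=
  moser_ellipsoid_integrals_commute_general n a ha F hF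
end

section
/- Let n ≥ 2, let a₁ > a₂ > … > aₙ be real numbers, A = diag(a₁,…,aₙ), and let Fₖ(q, p) = qₖ² + Σ_{i ≠ k} (qₖ pᵢ − qᵢ pₖ)² / (aₖ − aᵢ) be the Uhlenbeck functions on ℝⁿ × ℝⁿ. Then for all (q,p) ∈ ℝⁿ × ℝⁿ: (i) Σₖ Fₖ(q,p) = ⟨q,q⟩; (ii) Σₖ aₖ Fₖ(q,p) = ⟨Aq,q⟩ + ⟨q,q⟩⟨p,p⟩ − ⟨q,p⟩². In particular, at every point of the constraint set {⟨q,q⟩ = 1, ⟨q,p⟩ = 0} (the cotangent bundle of the unit sphere) one has Σₖ aₖ Fₖ(q,p) = 2H(q,p), where H(q,p) = ½⟨p,p⟩ + ½⟨Aq,q⟩ is the Hamiltonian of the Neumann system (motion on the sphere under the potential V(q) = ½⟨Aq,q⟩). -/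
open Finset

/-- Identities for the Uhlenbeck functions of the Neumann system:
their sum is `⟨q,q⟩`, the weighted sum `∑ aₖ Fₖ` equals `⟨Aq,q⟩ + ⟨q,q⟩⟨p,p⟩ − ⟨q,p⟩²`,
and on the constraint set `{⟨q,q⟩ = 1, ⟨q,p⟩ = 0}` the weighted sum is twice the
Neumann Hamiltonian `H(q,p) = ½⟨p,p⟩ + ½⟨Aq,q⟩`. -/
theorem uhlenbeck_sum_identities (n : ℕ) (hn : 2 ≤ n) (a : Fin n → ℝ)
    (ha : StrictAnti a) (F : Fin n → (Fin n → ℝ) × (Fin n → ℝ) → ℝ)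
    (hF : ∀ (k : Fin n) (q p : Fin n → ℝ),
      F k (q, p) = (q k) ^ 2 +
        ∑ i ∈ Finset.univ.erase k, (q k * p i - q i * p k) ^ 2 / (a k - a i))
    (H : (Fin n → ℝ) × (Fin n → ℝ) → ℝ)
    (hH : ∀ q p : Fin n → ℝ,
      H (q, p) = (1 / 2) * ∑ i, (p i) ^ 2 + (1 / 2) * ∑ i, a i * (q i) ^ 2) :
    ∀ q p : Fin n → ℝ,
      (∑ k, F k (q, p) = ∑ i, (q i) ^ 2) ∧
      (∑ k, a k * F k (q, p) =
        ∑ i, a i * (q i) ^ 2 + (∑ i, (q i) ^ 2) * (∑ i, (p i) ^ 2) -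
          (∑ i, q i * p i) ^ 2) ∧
      ((∑ i, (q i) ^ 2 = 1) → (∑ i, q i * p i = 0) →
        ∑ k, a k * F k (q, p) = 2 * H (q, p)) := by
  intro q p
  -- a is injective
  have hainj : ∀ k i : Fin n, i ≠ k → a k - a i ≠ 0 := by
    intro k i hik hc
    exact hik (ha.injective (by linarith)).symm
  -- helper: erase-sum as full sum minus diagonal term
  have h1 : ∀ f : Fin n → Fin n → ℝ,
      ∑ k, ∑ i ∈ Finset.univ.erase k, f k i = (∑ k, ∑ i, f k i) - ∑ k, f k k := by
    intro f
    rw [← Finset.sum_sub_distrib]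
    refine Finset.sum_congr rfl fun k _ => ?_
    rw [Finset.sum_erase_eq_sub (Finset.mem_univ k)]
  -- swap lemma
  have hswap : ∀ g : Fin n → Fin n → ℝ,
      ∑ k, ∑ i ∈ Finset.univ.erase k, g k i
        = ∑ k, ∑ i ∈ Finset.univ.erase k, g i k := by
    intro g
    rw [h1, h1, Finset.sum_comm]
  -- pairing lemma
  have hpair : ∀ g c : Fin n → Fin n → ℝ,
      (∀ k i : Fin n, i ≠ k → g k i + g i k = c k i) →
      2 * (∑ k, ∑ i ∈ Finset.univ.erase k, g k i)
        = ∑ k, ∑ i ∈ Finset.univ.erase k, c k i := by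
    intro g c h
    have : (∑ k, ∑ i ∈ Finset.univ.erase k, g k i)
        + (∑ k, ∑ i ∈ Finset.univ.erase k, g i k)
        = ∑ k, ∑ i ∈ Finset.univ.erase k, c k i := by
      rw [← Finset.sum_add_distrib]
      refine Finset.sum_congr rfl fun k _ => ?_
      rw [← Finset.sum_add_distrib]
      refine Finset.sum_congr rfl fun i hi => ?_
      exact h k i (Finset.mem_erase.1 hi).1
    rw [← hswap g] at this
    linarith
  -- part (i)
  have part1 : ∑ k, F k (q, p) = ∑ i, (q i) ^ 2 := by
    have hz : 2 * (∑ k, ∑ i ∈ Finset.univ.erase k,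
        (q k * p i - q i * p k) ^ 2 / (a k - a i)) = ∑ k : Fin n, ∑ _i ∈ Finset.univ.erase k, (0:ℝ) := by
      apply hpair
      intro k i _
      have e1 : (q i * p k - q k * p i) ^ 2 = (q k * p i - q i * p k) ^ 2 := by ring
      have e2 : a i - a k = -(a k - a i) := by ring
      rw [e1, e2, div_neg]
      ring
    simp only [Finset.sum_const_zero] at hz
    have hz' : (∑ k, ∑ i ∈ Finset.univ.erase k,
        (q k * p i - q i * p k) ^ 2 / (a k - a i)) = 0 := by linarith
    simp only [hF, Finset.sum_add_distrib, hz', add_zero]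
  -- Lagrange identity (off-diagonal)
  have lag : ∑ k, ∑ i ∈ Finset.univ.erase k, (q k * p i - q i * p k) ^ 2
      = 2 * ((∑ i, (q i) ^ 2) * (∑ i, (p i) ^ 2) - (∑ i, q i * p i) ^ 2) := by
    rw [h1]
    have hd : ∑ k, (q k * p k - q k * p k) ^ 2 = 0 := by simp
    have hfull : ∑ k, ∑ i, (q k * p i - q i * p k) ^ 2
        = 2 * ((∑ i, (q i) ^ 2) * (∑ i, (p i) ^ 2) - (∑ i, q i * p i) ^ 2) := by
      have e1 : (∑ i, (q i) ^ 2) * (∑ i, (p i) ^ 2) = ∑ k, ∑ i, (q k) ^ 2 * (p i) ^ 2 :=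
        Finset.sum_mul_sum _ _ _ _
      have e2 : (∑ i, q i * p i) ^ 2 = ∑ k, ∑ i, (q k * p k) * (q i * p i) := by
        rw [sq]; exact Finset.sum_mul_sum _ _ _ _
      have e3 : (∑ i, (p i) ^ 2) * (∑ i, (q i) ^ 2) = ∑ k, ∑ i, (p k) ^ 2 * (q i) ^ 2 :=
        Finset.sum_mul_sum _ _ _ _
      have expand : ∀ k, ∑ i, (q k * p i - q i * p k) ^ 2
          = ∑ i, ((q k) ^ 2 * (p i) ^ 2 + (p k) ^ 2 * (q i) ^ 2
              - 2 * ((q k * p k) * (q i * p i))) := by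
        intro k
        refine Finset.sum_congr rfl fun i _ => ?_
        ring
      calc ∑ k, ∑ i, (q k * p i - q i * p k) ^ 2
          = ∑ k, ∑ i, ((q k) ^ 2 * (p i) ^ 2 + (p k) ^ 2 * (q i) ^ 2
              - 2 * ((q k * p k) * (q i * p i))) := Finset.sum_congr rfl fun k _ => expand k
        _ = (∑ k, ∑ i, (q k) ^ 2 * (p i) ^ 2) + (∑ k, ∑ i, (p k) ^ 2 * (q i) ^ 2)
              - 2 * (∑ k, ∑ i, (q k * p k) * (q i * p i)) := by
            simp only [Finset.sum_sub_distrib, Finset.sum_add_distrib, ← Finset.mul_sum]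
        _ = 2 * ((∑ i, (q i) ^ 2) * (∑ i, (p i) ^ 2) - (∑ i, q i * p i) ^ 2) := by
            rw [← e1, ← e2, ← e3]; ring
    rw [hfull, hd]; ring
  -- part (ii)
  have part2 : ∑ k, a k * F k (q, p) =
      ∑ i, a i * (q i) ^ 2 + (∑ i, (q i) ^ 2) * (∑ i, (p i) ^ 2) -
        (∑ i, q i * p i) ^ 2 := by
    have hz : 2 * (∑ k, ∑ i ∈ Finset.univ.erase k,
        a k * ((q k * p i - q i * p k) ^ 2 / (a k - a i)))
        = ∑ k, ∑ i ∈ Finset.univ.erase k, (q k * p i - q i * p k) ^ 2 := by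
      apply hpair
      intro k i hik
      have hne := hainj k i hik
      have e1 : (q i * p k - q k * p i) ^ 2 = (q k * p i - q i * p k) ^ 2 := by ring
      have e2 : a i - a k = -(a k - a i) := by ring
      rw [e1, e2, div_neg]
      field_simp
      ring
    rw [lag] at hz
    have hz' : (∑ k, ∑ i ∈ Finset.univ.erase k,
        a k * ((q k * p i - q i * p k) ^ 2 / (a k - a i)))
        = (∑ i, (q i) ^ 2) * (∑ i, (p i) ^ 2) - (∑ i, q i * p i) ^ 2 := by linarith
    simp only [hF, mul_add, Finset.mul_sum, Finset.sum_add_distrib, hz']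
    ring
  refine ⟨part1, part2, fun hq hqp => ?_⟩
  rw [part2, hq, hqp, hH]
  ring
end

section
/- (Mishchenko–Fomenko argument shift method.) Let 𝔤 be a finite-dimensional real Lie algebra with an ad-invariant inner product, and let f, g : 𝔤 → ℝ be smooth invariant functions, i.e. [∇f(x), x] = 0 and [∇g(x), x] = 0 for all x ∈ 𝔤. Then for every a ∈ 𝔤 and all λ, μ ∈ ℝ, the shifted functions x ↦ f(x + λa) and x ↦ g(x + μa) are in involution with respect to the Lie–Poisson bracket: ⟨x, [∇f(x + λa), ∇g(x + μa)]⟩ = 0 for all x ∈ 𝔤. -/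
open scoped RealInnerProductSpace

lemma argshift_ne {E : Type*} [NormedAddCommGroup E] [InnerProductSpace ℝ E]
    [FiniteDimensional ℝ E]
    (B : E →ₗ[ℝ] E →ₗ[ℝ] E)
    (hskew : ∀ x y : E, B x y = -B y x)
    (hinv : ∀ x y z : E, ⟪B x y, z⟫ + ⟪y, B x z⟫ = 0)
    (f g : E → ℝ)
    (hfi : ∀ x : E, B (gradient f x) x = 0)
    (hgi : ∀ x : E, B (gradient g x) x = 0)
    (a : E) (lam mu : ℝ) (hne : lam ≠ mu) (x : E) :
    ⟪x, B (gradient f (x + lam • a)) (gradient g (x + mu • a))⟫ = 0 := by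
  set F := gradient f (x + lam • a) with hF
  set G := gradient g (x + mu • a) with hG
  have h1 : B F (x + lam • a) = 0 := hfi _
  have h2 : B G (x + mu • a) = 0 := hgi _
  -- ⟪x + lam•a, B F G⟫ = -⟪B F (x+lam•a), G⟫ = 0
  have e1 : ⟪x, B F G⟫ + lam * ⟪a, B F G⟫ = 0 := by
    have := hinv F (x + lam • a) G
    rw [h1] at this
    simpa [inner_add_left, inner_smul_left] using this
  have e2 : ⟪x, B F G⟫ + mu * ⟪a, B F G⟫ = 0 := by
    have := hinv G (x + mu • a) F
    rw [h2] at this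
    have hBGF : B G F = - B F G := hskew G F
    rw [hBGF] at this
    simp only [inner_zero_left, inner_neg_right, inner_add_left, inner_smul_left, RCLike.star_def, conj_trivial] at this
    -- this : -⟪x, B F G⟫ + (-(mu * ⟪a, B F G⟫)) = 0 (roughly)
    linarith [this]
  have hc : ⟪a, B F G⟫ = 0 := by
    have : (lam - mu) * ⟪a, B F G⟫ = 0 := by linarith
    rcases mul_eq_zero.mp this with h | h
    · exact absurd (sub_eq_zero.mp h) hne
    · exact h
  linarith [e1, hc, mul_eq_zero_of_right lam hc]

/-- The Mishchenko–Fomenko argument shift method: if `f` and `g` are smooth invariant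
functions on a finite-dimensional real Lie algebra (given by a bilinear bracket `B` that is
skew-symmetric, satisfies the Jacobi identity, and for which the inner product is
ad-invariant), then for every `a` and all `λ, μ ∈ ℝ` the shifted functions
`x ↦ f(x + λa)` and `x ↦ g(x + μa)` are in involution with respect to the Lie–Poisson
bracket: `⟨x, [∇f(x + λa), ∇g(x + μa)]⟩ = 0` for all `x`. -/
theorem argument_shift_involution
    {E : Type*} [NormedAddCommGroup E] [InnerProductSpace ℝ E] [FiniteDimensional ℝ E]
    (B : E →ₗ[ℝ] E →ₗ[ℝ] E)
    (hskew : ∀ x y : E, B x y = -B y x)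
    (hjacobi : ∀ x y z : E, B x (B y z) + B y (B z x) + B z (B x y) = 0)
    (hinv : ∀ x y z : E, ⟪B x y, z⟫ + ⟪y, B x z⟫ = 0)
    (f g : E → ℝ) (hf : ContDiff ℝ (⊤ : ℕ∞) f) (hg : ContDiff ℝ (⊤ : ℕ∞) g)
    (hfi : ∀ x : E, B (gradient f x) x = 0)
    (hgi : ∀ x : E, B (gradient g x) x = 0)
    (a : E) (lam mu : ℝ) :
    ∀ x : E, ⟪x, B (gradient f (x + lam • a)) (gradient g (x + mu • a))⟫ = 0 := by
  intro x
  rcases ne_or_eq lam mu with hne | heq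
  · exact argshift_ne B hskew hinv f g hfi hgi a lam mu hne x
  · subst heq
    -- continuity argument: φ t := ⟪x, B F (gradient g (x + t • a))⟫ vanishes for t ≠ lam
    set F := gradient f (x + lam • a) with hF
    have hgrad_cont : Continuous (gradient g) := by
      have hfd : Continuous (fderiv ℝ g) := hg.continuous_fderiv (by simp)
      have : gradient g = fun y => (InnerProductSpace.toDual ℝ E).symm (fderiv ℝ g y) := rfl
      rw [this]
      exact (InnerProductSpace.toDual ℝ E).symm.continuous.comp hfd
    have hφ : Continuous fun t : ℝ => ⟪x, B F (gradient g (x + t • a))⟫ := by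
      have hBF : Continuous (B F) := (B F).continuous_of_finiteDimensional
      exact (continuous_const.inner (hBF.comp
        (hgrad_cont.comp (continuous_const.add (continuous_id.smul continuous_const)))))
    have hzero : ∀ t : ℝ, t ≠ lam →
        ⟪x, B F (gradient g (x + t • a))⟫ = 0 := fun t ht =>
      argshift_ne B hskew hinv f g hfi hgi a lam t (Ne.symm ht) x
    have : (fun t : ℝ => ⟪x, B F (gradient g (x + t • a))⟫) = fun _ => (0 : ℝ) := by
      apply Continuous.ext_on (dense_compl_singleton lam) hφ continuous_const
      intro t ht
      exact hzero t ht
    exact congrFun this lam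
end

section
/- (Thimm–Trofimov chain method, basic step.) Let 𝔤 be a finite-dimensional real Lie algebra with an ad-invariant inner product, let 𝔥 ⊆ 𝔤 be a Lie subalgebra, and let π : 𝔤 → 𝔥 be the orthogonal projection. Let f̃ : 𝔥 → ℝ be a smooth function that is invariant for 𝔥 (i.e. [∇f̃(y), y] = 0 for all y ∈ 𝔥, the gradient taken within 𝔥), and let g̃ : 𝔥 → ℝ be an arbitrary smooth function. Then the lifted functions f̃ ∘ π and g̃ ∘ π are in involution with respect to the Lie–Poisson bracket of 𝔤: {f̃ ∘ π, g̃ ∘ π}(x) = 0 for all x ∈ 𝔤. In particular, lifts of invariants of a subalgebra commute among themselves and with lifts of all functions on that subalgebra. -/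
open scoped RealInnerProductSpace

lemma gradient_comp_proj {E : Type*} [NormedAddCommGroup E] [InnerProductSpace ℝ E]
    [FiniteDimensional ℝ E] (H : Submodule ℝ E) (f : H → ℝ) (hf : ContDiff ℝ (⊤ : ℕ∞) f) (x : E) :
    gradient (fun z : E => f (H.orthogonalProjectionOnto z)) x
      = ↑(gradient f (H.orthogonalProjectionOnto x)) := by
  set u := gradient f (H.orthogonalProjectionOnto x) with hu
  have hdf : HasGradientAt f u (H.orthogonalProjectionOnto x) :=
    ((hf.differentiable (by simp)) _).hasGradientAt
  have hfd : HasFDerivAt f (InnerProductSpace.toDual ℝ H u) (H.orthogonalProjectionOnto x) :=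
    hasGradientAt_iff_hasFDerivAt.mp hdf
  have hP : HasFDerivAt (fun z : E => (H.orthogonalProjectionOnto z : H))
      (H.orthogonalProjectionOnto : E →L[ℝ] H) x := (H.orthogonalProjectionOnto).hasFDerivAt
  have hcomp : HasFDerivAt (fun z : E => f (H.orthogonalProjectionOnto z))
      ((InnerProductSpace.toDual ℝ H u).comp (H.orthogonalProjectionOnto : E →L[ℝ] H)) x :=
    hfd.comp x hP
  have heq : (InnerProductSpace.toDual ℝ H u).comp (H.orthogonalProjectionOnto : E →L[ℝ] H)
      = InnerProductSpace.toDual ℝ E (↑u : E) := by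
    ext h
    simp only [ContinuousLinearMap.comp_apply, InnerProductSpace.toDual_apply_apply]
    have h1 : ⟪(u : E), h - ↑(H.orthogonalProjectionOnto h)⟫ = 0 := by
      rw [real_inner_comm]
      exact Submodule.starProjection_inner_eq_zero h _ u.2
    have h2 : ⟪(↑u : E), h⟫ = ⟪(↑u : E), ↑(H.orthogonalProjectionOnto h)⟫ := by
      have := inner_sub_right (𝕜 := ℝ) (↑u : E) h ↑(H.orthogonalProjectionOnto h)
      rw [h1] at this
      linarith
    rw [h2]
    rfl
  have : HasGradientAt (fun z : E => f (H.orthogonalProjectionOnto z)) (↑u : E) x :=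
    hasGradientAt_iff_hasFDerivAt.mpr (heq ▸ hcomp)
  exact this.gradient

/-- Thimm–Trofimov chain method, basic step: let `𝔥 ⊆ 𝔤` be a Lie subalgebra of a
finite-dimensional real Lie algebra with ad-invariant inner product, `π` the orthogonal
projection onto `𝔥`; if `f̃ : 𝔥 → ℝ` is a smooth invariant function of `𝔥` and
`g̃ : 𝔥 → ℝ` is an arbitrary smooth function, then `f̃ ∘ π` and `g̃ ∘ π` are in involution
with respect to the Lie–Poisson bracket of `𝔤`. -/
theorem chain_method_basic_step
    {E : Type*} [NormedAddCommGroup E] [InnerProductSpace ℝ E] [FiniteDimensional ℝ E]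
    (B : E →ₗ[ℝ] E →ₗ[ℝ] E)
    (hskew : ∀ x y : E, B x y = -B y x)
    (hjacobi : ∀ x y z : E, B x (B y z) + B y (B z x) + B z (B x y) = 0)
    (hinv : ∀ x y z : E, ⟪B x y, z⟫ + ⟪y, B x z⟫ = 0)
    (H : Submodule ℝ E) (hsub : ∀ x ∈ H, ∀ y ∈ H, B x y ∈ H)
    (ftil gtil : H → ℝ) (hft : ContDiff ℝ (⊤ : ℕ∞) ftil) (hgt : ContDiff ℝ (⊤ : ℕ∞) gtil)
    (hfinv : ∀ y : H, B (↑(gradient ftil y) : E) ((y : E)) = 0) :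
    ∀ x : E,
      ⟪x, B (gradient (fun z : E => ftil (H.orthogonalProjectionOnto z)) x)
            (gradient (fun z : E => gtil (H.orthogonalProjectionOnto z)) x)⟫ = 0 := by
  intro x
  rw [gradient_comp_proj H ftil hft x, gradient_comp_proj H gtil hgt x]
  set p : H := H.orthogonalProjectionOnto x with hp
  set u : E := ↑(gradient ftil p) with hudef
  set v : E := ↑(gradient gtil p) with hvdef
  have hBux : B u x = B u (x - ↑p) := by
    have h0 : B u (↑p : E) = 0 := hfinv p
    have : B u x = B u (x - ↑p) + B u (↑p : E) := by
      rw [← map_add, sub_add_cancel]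
    rw [this, h0, add_zero]
  have hBuvH : B u v ∈ H := hsub u (gradient ftil p).2 v (gradient gtil p).2
  have h1 : ⟪B u x, v⟫ + ⟪x, B u v⟫ = 0 := hinv u x v
  have h2 : ⟪B u (x - ↑p), v⟫ + ⟪x - ↑p, B u v⟫ = 0 := hinv u (x - ↑p) v
  have h3 : ⟪x - ↑p, B u v⟫ = 0 := Submodule.starProjection_inner_eq_zero x _ hBuvH
  rw [hBux] at h1
  linarith
end

section
/- (Generalized chain method for symmetric pairs.) Let 𝔤 be a finite-dimensional real Lie algebra with an ad-invariant inner product, and let 𝔤 = 𝔩 ⊕ 𝔴 be an orthogonal direct sum of subspaces with [𝔩,𝔩] ⊆ 𝔩, [𝔩,𝔴] ⊆ 𝔴, [𝔴,𝔴] ⊆ 𝔩, with orthogonal projections π_𝔩, π_𝔴. Let p, q : 𝔤 → ℝ be smooth invariant functions (i.e. [∇p(x), x] = 0 and [∇q(x), x] = 0 for all x ∈ 𝔤). Then for all λ, μ ∈ ℝ the functions p_λ(x) = p(λ·π_𝔩(x) + π_𝔴(x)) and q_μ(x) = q(μ·π_𝔩(x) + π_𝔴(x)) are in involution with respect to the Lie–Poisson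 bracket of 𝔤, and moreover each p_λ is in involution with every function of the form x ↦ h(π_𝔩(x)) for smooth h : 𝔩 → ℝ. -/
open scoped RealInnerProductSpace

section Aux

variable {E : Type*} [NormedAddCommGroup E] [InnerProductSpace ℝ E]

lemma gradient_comp_adj' {F : Type*} [CompleteSpace E]
    [NormedAddCommGroup F] [InnerProductSpace ℝ F] [CompleteSpace F]
    (T : E →L[ℝ] F) (S : F →L[ℝ] E) (hTS : ∀ (v : E) (w : F), ⟪T v, w⟫ = ⟪v, S w⟫)
    (f : F → ℝ) (x : E) (hf : DifferentiableAt ℝ f (T x)) :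
    gradient (fun y => f (T y)) x = S (gradient f (T x)) := by
  have h1 : HasGradientAt f (gradient f (T x)) (T x) := hf.hasGradientAt
  have h2 : HasFDerivAt (fun y => f (T y))
      ((InnerProductSpace.toDual ℝ F (gradient f (T x))).comp T) x :=
    h1.hasFDerivAt.comp x T.hasFDerivAt
  have h3 : (InnerProductSpace.toDual ℝ F (gradient f (T x))).comp T
      = InnerProductSpace.toDual ℝ E (S (gradient f (T x))) := by
    ext v
    simp only [ContinuousLinearMap.comp_apply, InnerProductSpace.toDual_apply_apply]
    rw [real_inner_comm, hTS, real_inner_comm]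
  rw [h3] at h2
  simpa using h2.hasGradientAt.gradient

lemma split_rel' (B : E →ₗ[ℝ] E →ₗ[ℝ] E)
    (hskew : ∀ x y : E, B x y = -B y x)
    (L W : Submodule ℝ E)
    (hLL : ∀ x ∈ L, ∀ y ∈ L, B x y ∈ L)
    (hLW : ∀ x ∈ L, ∀ y ∈ W, B x y ∈ W)
    (hWW : ∀ x ∈ W, ∀ y ∈ W, B x y ∈ L)
    (hdisj : Disjoint L W)
    (l w cL cW : E) (hl : l ∈ L) (hw : w ∈ W) (hcL : cL ∈ L) (hcW : cW ∈ W)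
    (t : ℝ) (hrel : B (cL + cW) (t • l + w) = 0) :
    t • B cL l + B cW w = 0 ∧ B cL w + t • B cW l = 0 := by
  have hexp : (t • B cL l + B cW w) + (B cL w + t • B cW l) = 0 := by
    rw [← hrel]; simp only [map_add, map_smul, LinearMap.add_apply, smul_add]; abel
  have hmemL : t • B cL l + B cW w ∈ L :=
    L.add_mem (L.smul_mem _ (hLL _ hcL _ hl)) (hWW _ hcW _ hw)
  have hmemW : B cL w + t • B cW l ∈ W := by
    refine W.add_mem (hLW _ hcL _ hw) (W.smul_mem _ ?_)
    rw [hskew]; exact W.neg_mem (hLW _ hl _ hcW)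
  have h1 : t • B cL l + B cW w = 0 := by
    refine (Submodule.disjoint_def.mp hdisj) _ hmemL ?_
    have : t • B cL l + B cW w = -(B cL w + t • B cW l) := by
      rw [eq_neg_iff_add_eq_zero]; exact hexp
    rw [this]; exact W.neg_mem hmemW
  refine ⟨h1, ?_⟩
  have h2 := hexp; rw [h1, zero_add] at h2; exact h2

lemma core_alg' (B : E →ₗ[ℝ] E →ₗ[ℝ] E)
    (hskew : ∀ x y : E, B x y = -B y x)
    (hinv : ∀ x y z : E, ⟪B x y, z⟫ + ⟪y, B x z⟫ = 0)
    (L W : Submodule ℝ E)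
    (horth : ∀ x ∈ L, ∀ y ∈ W, ⟪x, y⟫ = 0)
    (hLL : ∀ x ∈ L, ∀ y ∈ L, B x y ∈ L)
    (hLW : ∀ x ∈ L, ∀ y ∈ W, B x y ∈ W)
    (hWW : ∀ x ∈ W, ∀ y ∈ W, B x y ∈ L)
    (hdisj : Disjoint L W)
    (l w aL aW bL bW : E) (hl : l ∈ L) (hw : w ∈ W)
    (haL : aL ∈ L) (haW : aW ∈ W) (hbL : bL ∈ L) (hbW : bW ∈ W)
    (lam mu : ℝ) (hne : lam ^ 2 ≠ mu ^ 2)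
    (hpa : B (aL + aW) (lam • l + w) = 0)
    (hqb : B (bL + bW) (mu • l + w) = 0) :
    ⟪l + w, B (lam • aL + aW) (mu • bL + bW)⟫ = 0 := by
  obtain ⟨hP1, hP2⟩ := split_rel' B hskew L W hLL hLW hWW hdisj l w aL aW hl hw haL haW lam hpa
  obtain ⟨hQ1, hQ2⟩ := split_rel' B hskew L W hLL hLW hWW hdisj l w bL bW hl hw hbL hbW mu hqb
  set s1 := ⟪B aL l, bL⟫ with hs1
  set s2 := ⟪B aW l, bW⟫ with hs2
  set s3 := ⟪B aL w, bW⟫ with hs3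
  set s4 := ⟪B aW w, bL⟫ with hs4
  have key : ∀ u v z : E, ⟪B u z, v⟫ = -⟪B v z, u⟫ := by
    intro u v z
    have h1 := hinv u z v
    have h2 := hinv v z u
    have h4 : ⟪z, B u v⟫ = -⟪z, B v u⟫ := by rw [hskew u v, inner_neg_right]
    linarith
  have e1 : lam * s1 + s4 = 0 := by
    have := congrArg (fun z => ⟪z, bL⟫) hP1
    simpa [inner_add_left, real_inner_smul_left] using this
  have e2 : s3 + lam * s2 = 0 := by
    have := congrArg (fun z => ⟪z, bW⟫) hP2
    simpa [inner_add_left, real_inner_smul_left] using this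
  have e3 : mu * s1 + s3 = 0 := by
    have h1 := congrArg (fun z => ⟪z, aL⟫) hQ1
    have h2 : mu * ⟪B bL l, aL⟫ + ⟪B bW w, aL⟫ = 0 := by
      simpa [inner_add_left, real_inner_smul_left] using h1
    rw [key bL aL l, key bW aL w] at h2
    rw [← hs1, ← hs3] at h2; linarith
  have e4 : s4 + mu * s2 = 0 := by
    have h1 := congrArg (fun z => ⟪z, aW⟫) hQ2
    have h2 : ⟪B bL w, aW⟫ + mu * ⟪B bW l, aW⟫ = 0 := by
      simpa [inner_add_left, real_inner_smul_left] using h1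
    rw [key bL aW w, key bW aW l] at h2
    rw [← hs4, ← hs2] at h2; linarith
  have h1 : lam * s1 = mu * s2 := by linarith
  have h2 : lam * s2 = mu * s1 := by linarith
  have hs1z : s1 = 0 := by
    have h3 : (lam ^ 2 - mu ^ 2) * s1 = 0 := by linear_combination lam * h1 + mu * h2
    rcases mul_eq_zero.mp h3 with h | h
    · exact absurd (by linarith : lam ^ 2 = mu ^ 2) hne
    · exact h
  have hs2z : s2 = 0 := by
    have h3 : (lam ^ 2 - mu ^ 2) * s2 = 0 := by linear_combination lam * h2 + mu * h1
    rcases mul_eq_zero.mp h3 with h | h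
    · exact absurd (by linarith : lam ^ 2 = mu ^ 2) hne
    · exact h
  have hs3z : s3 = 0 := by
    have : mu * s1 = 0 := by rw [hs1z, mul_zero]
    linarith
  have hs4z : s4 = 0 := by
    have : lam * s1 = 0 := by rw [hs1z, mul_zero]
    linarith
  have horth' : ∀ u ∈ W, ∀ v ∈ L, ⟪u, v⟫ = 0 := by
    intro u hu v hv; rw [real_inner_comm]; exact horth v hv u hu
  have hBaWbL : B aW bL ∈ W := by
    rw [hskew]; exact W.neg_mem (hLW _ hbL _ haW)
  have t1 : ⟪l + w, B aL bL⟫ = -s1 := by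
    rw [inner_add_left, horth' w hw _ (hLL _ haL _ hbL), add_zero]
    have := hinv aL l bL; linarith
  have t2 : ⟪l + w, B aL bW⟫ = -s3 := by
    rw [inner_add_left, horth l hl _ (hLW _ haL _ hbW), zero_add]
    have := hinv aL w bW; linarith
  have t3 : ⟪l + w, B aW bL⟫ = -s4 := by
    rw [inner_add_left, horth l hl _ hBaWbL, zero_add]
    have := hinv aW w bL; linarith
  have t4 : ⟪l + w, B aW bW⟫ = -s2 := by
    rw [inner_add_left, horth' w hw _ (hWW _ haW _ hbW), add_zero]
    have := hinv aW l bW; linarith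
  have hexp : ⟪l + w, B (lam • aL + aW) (mu • bL + bW)⟫
      = lam * mu * ⟪l + w, B aL bL⟫ + lam * ⟪l + w, B aL bW⟫
        + mu * ⟪l + w, B aW bL⟫ + ⟪l + w, B aW bW⟫ := by
    simp only [map_add, map_smul, LinearMap.add_apply, LinearMap.smul_apply,
      inner_add_right, inner_smul_right, smul_smul]
    ring
  rw [hexp, t1, t2, t3, t4, hs1z, hs2z, hs3z, hs4z]; ring

end Aux

/-- Generalized chain method for symmetric pairs: if `𝔤 = 𝔩 ⊕ 𝔴` is an orthogonal
symmetric pair decomposition of a finite-dimensional real Lie algebra with ad-invariant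
inner product, and `p, q` are smooth invariant functions on `𝔤`, then for all `λ, μ` the
functions `x ↦ p(λ·π_𝔩 x + π_𝔴 x)` and `x ↦ q(μ·π_𝔩 x + π_𝔴 x)` are in involution with
respect to the Lie–Poisson bracket, and each of them is in involution with every function
of the form `x ↦ h(π_𝔩 x)`. -/
theorem generalized_chain_symmetric_pair
    {E : Type*} [NormedAddCommGroup E] [InnerProductSpace ℝ E] [FiniteDimensional ℝ E]
    (B : E →ₗ[ℝ] E →ₗ[ℝ] E)
    (hskew : ∀ x y : E, B x y = -B y x)
    (hjacobi : ∀ x y z : E, B x (B y z) + B y (B z x) + B z (B x y) = 0)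
    (hinv : ∀ x y z : E, ⟪B x y, z⟫ + ⟪y, B x z⟫ = 0)
    (L W : Submodule ℝ E) (hcompl : IsCompl L W)
    (horth : ∀ x ∈ L, ∀ y ∈ W, ⟪x, y⟫ = 0)
    (hLL : ∀ x ∈ L, ∀ y ∈ L, B x y ∈ L)
    (hLW : ∀ x ∈ L, ∀ y ∈ W, B x y ∈ W)
    (hWW : ∀ x ∈ W, ∀ y ∈ W, B x y ∈ L)
    (πL πW : E →ₗ[ℝ] E)
    (hπL : ∀ x : E, πL x = (L.linearProjOfIsCompl W hcompl x : E))
    (hπW : ∀ x : E, πW x = (W.linearProjOfIsCompl L hcompl.symm x : E))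
    (p q : E → ℝ) (hp : ContDiff ℝ (⊤ : ℕ∞) p) (hq : ContDiff ℝ (⊤ : ℕ∞) q)
    (hpi : ∀ x : E, B (gradient p x) x = 0)
    (hqi : ∀ x : E, B (gradient q x) x = 0)
    (lam mu : ℝ) :
    (∀ x : E,
      ⟪x, B (gradient (fun y : E => p (lam • πL y + πW y)) x)
            (gradient (fun y : E => q (mu • πL y + πW y)) x)⟫ = 0) ∧
    (∀ (h : L → ℝ), ContDiff ℝ (⊤ : ℕ∞) h → ∀ x : E,
      ⟪x, B (gradient (fun y : E => p (lam • πL y + πW y)) x)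
            (gradient (fun y : E => h (L.linearProjOfIsCompl W hcompl y)) x)⟫ = 0) := by
  have hdisj : Disjoint L W := hcompl.disjoint
  have hπLmem : ∀ x : E, πL x ∈ L := fun x => by
    rw [hπL]; exact (L.linearProjOfIsCompl W hcompl x).2
  have hπWmem : ∀ x : E, πW x ∈ W := fun x => by
    rw [hπW]; exact (W.linearProjOfIsCompl L hcompl.symm x).2
  have hsum : ∀ x : E, πL x + πW x = x := fun x => by
    rw [hπL, hπW]; exact Submodule.projection_add_projection_eq_self hcompl x
  have horth' : ∀ u ∈ W, ∀ v ∈ L, ⟪u, v⟫ = 0 := by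
    intro u hu v hv; rw [real_inner_comm]; exact horth v hv u hu
  -- the scaling maps as continuous linear maps
  let T : ℝ → E →L[ℝ] E := fun t =>
    t • LinearMap.toContinuousLinearMap πL + LinearMap.toContinuousLinearMap πW
  have hTapp : ∀ (t : ℝ) (y : E), T t y = t • πL y + πW y := by
    intro t y
    simp [T, ContinuousLinearMap.add_apply, ContinuousLinearMap.smul_apply]
  have hTsa : ∀ (t : ℝ) (v u : E), ⟪T t v, u⟫ = ⟪v, T t u⟫ := by
    intro t v u
    have hLa : ∀ a b : E, ⟪πL a, b⟫ = ⟪πL a, πL b⟫ := by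
      intro a b
      conv_lhs => rw [← hsum b]
      rw [inner_add_right, horth _ (hπLmem a) _ (hπWmem b), add_zero]
    have hWa : ∀ a b : E, ⟪πW a, b⟫ = ⟪πW a, πW b⟫ := by
      intro a b
      conv_lhs => rw [← hsum b]
      rw [inner_add_right, horth' _ (hπWmem a) _ (hπLmem b), zero_add]
    rw [hTapp, hTapp, inner_add_left, inner_add_right, real_inner_smul_left,
      real_inner_smul_right]
    have hc1 : ⟪v, πL u⟫ = ⟪πL v, πL u⟫ :=
      calc ⟪v, πL u⟫ = ⟪πL u, v⟫ := real_inner_comm _ _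
        _ = ⟪πL u, πL v⟫ := hLa u v
        _ = ⟪πL v, πL u⟫ := real_inner_comm _ _
    have hc2 : ⟪v, πW u⟫ = ⟪πW v, πW u⟫ :=
      calc ⟪v, πW u⟫ = ⟪πW u, v⟫ := real_inner_comm _ _
        _ = ⟪πW u, πW v⟫ := hWa u v
        _ = ⟪πW v, πW u⟫ := real_inner_comm _ _
    rw [hLa v u, hWa v u, hc1, hc2]
  -- gradient formula for the scaled compositions
  have hgrad : ∀ (f : E → ℝ), ContDiff ℝ (⊤ : ℕ∞) f → ∀ (t : ℝ) (x : E),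
      gradient (fun y => f (t • πL y + πW y)) x
        = t • πL (gradient f (t • πL x + πW x)) + πW (gradient f (t • πL x + πW x)) := by
    intro f hf t x
    have hfun : (fun y => f (T t y)) = fun y => f (t • πL y + πW y) := by
      funext y; rw [hTapp]
    have := gradient_comp_adj' (T t) (T t) (hTsa t) f x (hf.differentiable (by simp) _)
    rw [hfun, hTapp, hTapp] at this
    exact this
  constructor
  · -- first part
    intro x
    set a : E := gradient p (lam • πL x + πW x) with ha
    rw [hgrad p hp lam x, hgrad q hq mu x]
    -- the function of the second parameter
    set Φ : ℝ → ℝ := fun t =>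
      ⟪x, B (lam • πL a + πW a)
          (t • πL (gradient q (t • πL x + πW x)) + πW (gradient q (t • πL x + πW x)))⟫ with hΦdef
    have key : ∀ t : ℝ, lam ^ 2 ≠ t ^ 2 → Φ t = 0 := by
      intro t ht
      have hpa : B (πL a + πW a) (lam • πL x + πW x) = 0 := by
        rw [hsum a, ha]; exact hpi _
      have hqb : B (πL (gradient q (t • πL x + πW x)) + πW (gradient q (t • πL x + πW x)))
          (t • πL x + πW x) = 0 := by
        rw [hsum]; exact hqi _
      have := core_alg' B hskew hinv L W horth hLL hLW hWW hdisj
        (πL x) (πW x) (πL a) (πW a)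
        (πL (gradient q (t • πL x + πW x))) (πW (gradient q (t • πL x + πW x)))
        (hπLmem x) (hπWmem x) (hπLmem a) (hπWmem a) (hπLmem _) (hπWmem _)
        lam t ht hpa hqb
      rw [hsum x] at this
      exact this
    have hgc : Continuous (gradient q) := by
      have hfd : Continuous (fun y => fderiv ℝ q y) := hq.continuous_fderiv (by simp)
      exact (InnerProductSpace.toDual ℝ E).symm.continuous.comp hfd
    have hπLc : Continuous πL := πL.continuous_of_finiteDimensional
    have hπWc : Continuous πW := πW.continuous_of_finiteDimensional
    have hb : Continuous fun t : ℝ => gradient q (t • πL x + πW x) := by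
      apply hgc.comp
      exact (continuous_id.smul continuous_const).add continuous_const
    have hvec : Continuous fun t : ℝ =>
        t • πL (gradient q (t • πL x + πW x)) + πW (gradient q (t • πL x + πW x)) :=
      (continuous_id.smul (hπLc.comp hb)).add (hπWc.comp hb)
    have hΦc : Continuous Φ :=
      Continuous.inner continuous_const
        ((B (lam • πL a + πW a)).continuous_of_finiteDimensional.comp hvec)
    have hev : ∀ᶠ t in nhdsWithin mu {mu}ᶜ, Φ t = 0 := by
      have hne' : ∀ c : ℝ, ∀ᶠ t in nhdsWithin mu {mu}ᶜ, t ≠ c := by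
        intro c
        by_cases hc : c = mu
        · subst hc
          exact eventually_mem_nhdsWithin.mono fun t ht => ht
        · exact ((eventually_ne_nhds (Ne.symm hc)).filter_mono nhdsWithin_le_nhds)
      filter_upwards [hne' lam, hne' (-lam)] with t h1 h2
      apply key
      intro h
      rcases sq_eq_sq_iff_eq_or_eq_neg.mp h.symm with h3 | h3
      · exact h1 h3
      · exact h2 h3
    have h2 : Filter.Tendsto Φ (nhdsWithin mu {mu}ᶜ) (nhds (Φ mu)) :=
      (hΦc.tendsto mu).mono_left nhdsWithin_le_nhds
    have h3 : Filter.Tendsto Φ (nhdsWithin mu {mu}ᶜ) (nhds 0) :=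
      (Filter.tendsto_congr' hev).mpr tendsto_const_nhds
    exact tendsto_nhds_unique h2 h3
  · -- second part
    intro h hh x
    rw [hgrad p hp lam x]
    set a : E := gradient p (lam • πL x + πW x) with ha
    -- gradient of the composition with projection onto L
    have hLcomplete : CompleteSpace L := FiniteDimensional.complete ℝ L
    set P : E →L[ℝ] L := LinearMap.toContinuousLinearMap (L.linearProjOfIsCompl W hcompl)
      with hP
    have hPapp : ∀ y : E, P y = L.linearProjOfIsCompl W hcompl y := fun y => rfl
    have hPadj : ∀ (v : E) (u : L), ⟪P v, u⟫ = ⟪v, L.subtypeL u⟫ := by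
      intro v u
      rw [Submodule.coe_inner, Submodule.subtypeL_apply]
      have hcoe : ((P v : L) : E) = πL v := (hπL v).symm
      rw [hcoe]
      conv_rhs => rw [← hsum v]
      rw [inner_add_left, horth' _ (hπWmem v) _ u.2, add_zero]
    have hgr : gradient (fun y : E => h (L.linearProjOfIsCompl W hcompl y)) x
        = L.subtypeL (gradient h (P x)) := by
      have hfun : (fun y : E => h (P y)) = fun y : E => h (L.linearProjOfIsCompl W hcompl y) := by
        funext y; rw [hPapp]
      have := gradient_comp_adj' P L.subtypeL hPadj h x (hh.differentiable (by simp) _)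
      rw [hfun] at this
      exact this
    rw [hgr]
    set c : E := L.subtypeL (gradient h (P x)) with hc
    have hcL : c ∈ L := (gradient h (P x)).2
    -- invariance relation at lam • πL x + πW x
    have hpa : B (πL a + πW a) (lam • πL x + πW x) = 0 := by
      rw [hsum a, ha]; exact hpi _
    obtain ⟨hP1, _⟩ := split_rel' B hskew L W hLL hLW hWW hdisj
      (πL x) (πW x) (πL a) (πW a) (hπLmem x) (hπWmem x) (hπLmem a) (hπWmem a) lam hpa
    -- final computation
    have hBaWc : B (πW a) c ∈ W := by
      rw [hskew]; exact W.neg_mem (hLW _ hcL _ (hπWmem a))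
    have t1 : ⟪x, B (πL a) c⟫ = -⟪B (πL a) (πL x), c⟫ := by
      conv_lhs => rw [← hsum x]
      rw [inner_add_left, horth' _ (hπWmem x) _ (hLL _ (hπLmem a) _ hcL), add_zero]
      have := hinv (πL a) (πL x) c; linarith
    have t2 : ⟪x, B (πW a) c⟫ = -⟪B (πW a) (πW x), c⟫ := by
      conv_lhs => rw [← hsum x]
      rw [inner_add_left, horth _ (hπLmem x) _ hBaWc, zero_add]
      have := hinv (πW a) (πW x) c; linarith
    have hexp : ⟪x, B (lam • πL a + πW a) c⟫
        = lam * ⟪x, B (πL a) c⟫ + ⟪x, B (πW a) c⟫ := by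
      simp only [map_add, map_smul, LinearMap.add_apply, LinearMap.smul_apply,
        inner_add_right, inner_smul_right]
    rw [hexp, t1, t2]
    have hfin := congrArg (fun z => ⟪z, c⟫) hP1
    simp only [inner_add_left, real_inner_smul_left, inner_zero_left] at hfin
    linarith
end

section
/- (Maupertuis principle, trajectory form.) Let n ≥ 1, let M : ℝⁿ → Sym(n, ℝ) be a smooth map taking values in symmetric positive-definite n×n matrices, let V : ℝⁿ → ℝ be smooth, and let h ∈ ℝ with V(x) < h for all x ∈ ℝⁿ. Define H(x, p) = ½⟨M(x)p, p⟩ + V(x) and H_h(x, p) = ⟨M(x)p, p⟩ / (2(h − V(x))). If γ = (x, p) : ℝ → ℝⁿ × ℝⁿ is a solution of Hamilton's equations for H with H(γ(0)) = h, then there exist an open interval J containing 0 and a strictly increasing continuously differentiable function τ : J → ℝ with τ(0) = 0 such that γ ∘ τ solves Hamilton's equations for H_h on J. Thus the integral trajectories of X_H on the iso-energy level {H = h} coincide, up to reparametrization, with trajectories of X_{H_h}. -/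
open Matrix

/-- Maupertuis principle, trajectory form: if `γ = (x,p)` solves Hamilton's equations for
`H(x,p) = ½⟨M(x)p,p⟩ + V(x)` with `H(γ(0)) = h`, then there is an open interval `(a,b) ∋ 0`
and a strictly increasing `C¹` reparametrization `τ` with `τ(0) = 0` such that `γ ∘ τ`
solves Hamilton's equations for `H_h(x,p) = ⟨M(x)p,p⟩/(2(h − V(x)))` on `(a,b)`. -/
theorem maupertuis_trajectory_form (n : ℕ) (hn : 1 ≤ n)
    (M : (Fin n → ℝ) → Matrix (Fin n) (Fin n) ℝ)
    (hM : ∀ i j : Fin n, ContDiff ℝ (⊤ : ℕ∞) (fun x => M x i j))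
    (hsymm : ∀ x : Fin n → ℝ, (M x).IsSymm)
    (hposdef : ∀ x : Fin n → ℝ, (M x).PosDef)
    (V : (Fin n → ℝ) → ℝ) (hV : ContDiff ℝ (⊤ : ℕ∞) V)
    (h : ℝ) (hVh : ∀ x : Fin n → ℝ, V x < h)
    (H Hh : (Fin n → ℝ) × (Fin n → ℝ) → ℝ)
    (hH : ∀ x p : Fin n → ℝ, H (x, p) = (1 / 2) * ((M x *ᵥ p) ⬝ᵥ p) + V x)
    (hHh : ∀ x p : Fin n → ℝ, Hh (x, p) = ((M x *ᵥ p) ⬝ᵥ p) / (2 * (h - V x)))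
    (x p : ℝ → Fin n → ℝ)
    (hx : ∀ (i : Fin n) (t : ℝ),
      HasDerivAt (fun s => x s i) (fderiv ℝ H (x t, p t) (0, Pi.single i 1)) t)
    (hp : ∀ (i : Fin n) (t : ℝ),
      HasDerivAt (fun s => p s i) (-(fderiv ℝ H (x t, p t) (Pi.single i 1, 0))) t)
    (h0 : H (x 0, p 0) = h) :
    ∃ a b : ℝ, a < 0 ∧ 0 < b ∧ ∃ τ : ℝ → ℝ, τ 0 = 0 ∧
      StrictMonoOn τ (Set.Ioo a b) ∧ ContDiffOn ℝ 1 τ (Set.Ioo a b) ∧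
      ∀ t ∈ Set.Ioo a b, ∀ i : Fin n,
        HasDerivAt (fun s => x (τ s) i)
          (fderiv ℝ Hh (x (τ t), p (τ t)) (0, Pi.single i 1)) t ∧
        HasDerivAt (fun s => p (τ s) i)
          (-(fderiv ℝ Hh (x (τ t), p (τ t)) (Pi.single i 1, 0))) t := by
  classical
  have hdne : ∀ y : Fin n → ℝ, h - V y ≠ 0 := fun y => ne_of_gt (sub_pos.2 (hVh y))
  -- H as an explicit formula
  have hHfun : H = fun z : (Fin n → ℝ) × (Fin n → ℝ) =>
      (1 / 2) * ((M z.1 *ᵥ z.2) ⬝ᵥ z.2) + V z.1 := funext fun z => hH z.1 z.2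
  -- smoothness of the kinetic term
  have hK : ContDiff ℝ 1 (fun z : (Fin n → ℝ) × (Fin n → ℝ) => (M z.1 *ᵥ z.2) ⬝ᵥ z.2) := by
    simp only [dotProduct, mulVec]
    apply ContDiff.sum
    intro i _
    apply ContDiff.mul
    · apply ContDiff.sum
      intro j _
      exact (((hM i j).of_le (by simp)).comp contDiff_fst).mul
        ((contDiff_apply (𝕜 := ℝ) (E := ℝ) j).comp contDiff_snd)
    · exact (contDiff_apply (𝕜 := ℝ) (E := ℝ) i).comp contDiff_snd
  have hHc : ContDiff ℝ 1 H := by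
    rw [hHfun]
    exact (contDiff_const.mul hK).add ((hV.of_le (by simp)).comp contDiff_fst)
  have hHd : ∀ z, HasFDerivAt H (fderiv ℝ H z) z :=
    fun z => (hHc.differentiable one_ne_zero z).hasFDerivAt
  -- basis expansion for a continuous linear functional on the product
  have hsingle : ∀ v : Fin n → ℝ, v = ∑ i, v i • (Pi.single i (1 : ℝ) : Fin n → ℝ) := by
    intro v
    funext j
    rw [Finset.sum_apply]
    simp [Pi.single_apply]
  have hLexp : ∀ (L : ((Fin n → ℝ) × (Fin n → ℝ)) →L[ℝ] ℝ) (v w : Fin n → ℝ),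
      L (v, w) = (∑ i, v i * L (Pi.single i 1, 0)) + (∑ i, w i * L (0, Pi.single i 1)) := by
    intro L v w
    have h1 : ((v, w) : (Fin n → ℝ) × (Fin n → ℝ)) =
        (∑ i, v i • ((Pi.single i (1:ℝ) : Fin n → ℝ), (0 : Fin n → ℝ)))
          + (∑ i, w i • ((0 : Fin n → ℝ), (Pi.single i (1:ℝ) : Fin n → ℝ))) := by
      apply Prod.ext
      · simp [Prod.fst_sum]
        exact hsingle v
      · simp [Prod.snd_sum]
        exact hsingle w
    rw [h1, map_add, map_sum, map_sum]
    simp only [_root_.map_smul, smul_eq_mul]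
  -- the curve
  have hγ : ∀ t, HasDerivAt (fun s => (x s, p s))
      ((fun i => fderiv ℝ H (x t, p t) (0, Pi.single i 1)),
       (fun i => -(fderiv ℝ H (x t, p t) (Pi.single i 1, 0)))) t := fun t =>
    (hasDerivAt_pi.2 fun i => hx i t).prodMk (hasDerivAt_pi.2 fun i => hp i t)
  -- energy conservation
  have hEderiv : ∀ t, HasDerivAt (fun s => H (x s, p s)) 0 t := by
    intro t
    have h1 := (hHd (x t, p t)).comp_hasDerivAt t (hγ t)
    refine h1.congr_deriv (Eq.symm ?_)
    rw [hLexp]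
    rw [← Finset.sum_add_distrib]
    refine (Finset.sum_eq_zero fun i _ => ?_).symm
    ring
  have hlevel : ∀ t, H (x t, p t) = h := by
    intro t
    have hcon := is_const_of_deriv_eq_zero (f := fun s => H (x s, p s))
      (fun s => (hEderiv s).differentiableAt) (fun s => (hEderiv s).deriv) t 0
    rw [hcon, h0]
  -- relation between the differentials of Hh and H on the level set
  have key : ∀ (z : (Fin n → ℝ) × (Fin n → ℝ)), H z = h → ∀ v,
      fderiv ℝ Hh z v = (h - V z.1)⁻¹ * fderiv ℝ H z v := by
    intro z hz v
    have hVd : HasFDerivAt (fun w : (Fin n → ℝ) × (Fin n → ℝ) => V w.1)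
        ((fderiv ℝ V z.1).comp (ContinuousLinearMap.fst ℝ (Fin n → ℝ) (Fin n → ℝ))) z :=
      (hV.differentiable (by simp) z.1).hasFDerivAt.comp z hasFDerivAt_fst
    set W := (fderiv ℝ V z.1).comp (ContinuousLinearMap.fst ℝ (Fin n → ℝ) (Fin n → ℝ)) with hW
    have hc : HasFDerivAt (fun w => H w - V w.1) (fderiv ℝ H z - W) z := (hHd z).sub hVd
    have hd : HasFDerivAt (fun w : (Fin n → ℝ) × (Fin n → ℝ) => h - V w.1) (0 - W) z :=
      (hasFDerivAt_const h z).sub hVd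
    have hinv : HasFDerivAt (fun w : (Fin n → ℝ) × (Fin n → ℝ) => (h - V w.1)⁻¹)
        ((-((h - V z.1) ^ 2)⁻¹) • (0 - W)) z := by
      have := (hasDerivAt_inv (hdne z.1)).comp_hasFDerivAt z hd
      refine this.congr_fderiv ?_
      simp
    have hmul := hc.mul hinv
    have hHhfun : Hh = fun w : (Fin n → ℝ) × (Fin n → ℝ) =>
        (H w - V w.1) * (h - V w.1)⁻¹ := by
      funext w
      have e1 : Hh w = (M w.1 *ᵥ w.2) ⬝ᵥ w.2 / (2 * (h - V w.1)) := hHh w.1 w.2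
      have e2 : H w = (1 / 2) * ((M w.1 *ᵥ w.2) ⬝ᵥ w.2) + V w.1 := hH w.1 w.2
      rw [e1, e2]
      field_simp
      ring
    have hfd : fderiv ℝ Hh z =
        (H z - V z.1) • ((-((h - V z.1) ^ 2)⁻¹) • (0 - W)) + (h - V z.1)⁻¹ • (fderiv ℝ H z - W) := by
      rw [hHhfun]
      exact hmul.fderiv
    rw [hfd]
    simp only [ContinuousLinearMap.add_apply, ContinuousLinearMap.smul_apply,
      ContinuousLinearMap.sub_apply, ContinuousLinearMap.zero_apply, smul_eq_mul, hz]
    have hd0 : h - V z.1 ≠ 0 := hdne z.1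
    field_simp
    ring
  -- the trajectory is C¹
  have hxdiff : ∀ i, Differentiable ℝ fun s => x s i := fun i t => (hx i t).differentiableAt
  have hpdiff : ∀ i, Differentiable ℝ fun s => p s i := fun i t => (hp i t).differentiableAt
  have hxc : Continuous x := continuous_pi fun i => (hxdiff i).continuous
  have hpc : Continuous p := continuous_pi fun i => (hpdiff i).continuous
  have hfd_cont : Continuous fun t => fderiv ℝ H (x t, p t) :=
    (hHc.continuous_fderiv one_ne_zero).comp (hxc.prodMk hpc)
  have hxC1 : ContDiff ℝ 1 x := by
    refine contDiff_pi.2 fun i => contDiff_one_iff_deriv.2 ⟨hxdiff i, ?_⟩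
    have hde : (deriv fun s => x s i) = fun t => fderiv ℝ H (x t, p t) (0, Pi.single i 1) :=
      funext fun t => (hx i t).deriv
    rw [hde]
    exact hfd_cont.clm_apply continuous_const
  have hvC1 : ContDiff ℝ 1 (fun y : ℝ => (h - V (x y))⁻¹) :=
    (contDiff_const.sub ((hV.of_le (by simp)).comp hxC1)).inv fun y => hdne (x y)
  -- solve the reparametrization ODE
  obtain ⟨τ, hτ0, ε, hε, hτd⟩ :=
    ContDiffAt.exists_forall_mem_closedBall_exists_eq_forall_mem_Ioo_hasDerivAt₀ (x₀ := (0 : ℝ)) hvC1.contDiffAt (0 : ℝ)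
  have hτd' : ∀ t ∈ Set.Ioo (-ε) ε, HasDerivAt τ ((h - V (x (τ t)))⁻¹) t := by
    intro t ht
    exact hτd t (by constructor <;> [linarith [ht.1]; linarith [ht.2]])
  refine ⟨-ε, ε, by linarith, hε, τ, hτ0, ?_, ?_, ?_⟩
  · -- strict monotonicity
    have hcont : ContinuousOn τ (Set.Ioo (-ε) ε) :=
      fun t ht => ((hτd' t ht).continuousAt).continuousWithinAt
    apply strictMonoOn_of_deriv_pos (convex_Ioo _ _) hcont
    intro t ht
    rw [interior_Ioo] at ht
    rw [(hτd' t ht).deriv]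
    exact inv_pos.2 (sub_pos.2 (hVh _))
  · -- C¹
    rw [show (1 : WithTop ℕ∞) = 0 + 1 from rfl,
      contDiffOn_succ_iff_deriv_of_isOpen isOpen_Ioo]
    refine ⟨fun t ht => ((hτd' t ht).differentiableAt).differentiableWithinAt, by simp, ?_⟩
    rw [contDiffOn_zero]
    have : Set.EqOn (deriv τ) ((fun y : ℝ => (h - V (x y))⁻¹) ∘ τ) (Set.Ioo (-ε) ε) :=
      fun t ht => (hτd' t ht).deriv
    refine ContinuousOn.congr ?_ this
    exact hvC1.continuous.comp_continuousOn
      fun t ht => ((hτd' t ht).continuousAt).continuousWithinAt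
  · -- the reparametrized curve solves Hamilton's equations for Hh
    intro t ht i
    have hz := hlevel (τ t)
    constructor
    · have h1 := HasDerivAt.comp t (hx i (τ t)) (hτd' t ht)
      have h2 : HasDerivAt (fun s => x (τ s) i)
          (fderiv ℝ H (x (τ t), p (τ t)) (0, Pi.single i 1) * (h - V (x (τ t)))⁻¹) t := h1
      rw [key (x (τ t), p (τ t)) hz (0, Pi.single i 1)]
      convert h2 using 1
      ring
    · have h1 := HasDerivAt.comp t (hp i (τ t)) (hτd' t ht)
      have h2 : HasDerivAt (fun s => p (τ s) i)
          (-(fderiv ℝ H (x (τ t), p (τ t)) (Pi.single i 1, 0)) * (h - V (x (τ t)))⁻¹) t := h1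
      rw [key (x (τ t), p (τ t)) hz (Pi.single i 1, 0)]
      convert h2 using 1
      ring
end
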